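/- Fix an integer k ≥ 1, data a₁,…,a_k ∈ (0,∞), z₁,…,z_k ∈ {0,1}, and fix β > 0. Let |z| = Σ_{i=1}^{k} z_i. Then as α → ∞, ℓ_k(z|a,(α,β)) = O( (log α)^{-|z|} · exp( -(1/(2β²)) Σ_{i=1}^{k} z_i(log a_i - log α)² ) ). -/

import Mathlib

/-!
For `x ≤ -m < 0` the Gaussian tail obeys Mills' bound `Φ(x) ≤ exp(-x²/2) / (√(2π) m)`.
Once `log α ≥ 2 log aᵢ` we have `log(aᵢ/α)/β ≤ -log α / (2β)`, so
`Φ(log(aᵢ/α)/β) ≤ (2β/√(2π)) (log α)⁻¹ exp(-(log aᵢ - log α)²/(2β²))`. Since `1 - Φ ∈ [0, 1]`,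
the `i`-th factor of the likelihood is at most the `zᵢ`-th power of this bound, and multiplying
gives the claim with `C = (2β/√(2π))^|z|`.
-/

open MeasureTheory Real Filter Set

/-- The standard Gaussian cumulative distribution function. -/
noncomputable def Phi (x : ℝ) : ℝ :=
  (Real.sqrt (2 * Real.pi))⁻¹ * ∫ t in Set.Iic x, Real.exp (-t ^ 2 / 2)

/-- The likelihood of the log-normal (probit) fragility model. -/
noncomputable def lik (k : ℕ) (a : Fin k → ℝ) (z : Fin k → ℕ) (α β : ℝ) : ℝ :=
  ∏ i, Phi (Real.log (a i / α) / β) ^ (z i) *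
    (1 - Phi (Real.log (a i / α) / β)) ^ (1 - z i)

lemma exp_neg_sq_div_two (t : ℝ) : exp (-t ^ 2 / 2) = exp (-(1 / 2) * t ^ 2) := by
  ring_nf

lemma integrable_exp_neg_sq_div_two : Integrable fun t : ℝ => exp (-t ^ 2 / 2) := by
  simpa only [exp_neg_sq_div_two] using integrable_exp_neg_mul_sq (b := 1 / 2) (by norm_num)

lemma integrable_mul_exp_neg_sq_div_two : Integrable fun t : ℝ => t * exp (-t ^ 2 / 2) := by
  simpa only [exp_neg_sq_div_two] using integrable_mul_exp_neg_mul_sq (b := 1 / 2) (by norm_num)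

lemma integral_exp_neg_sq_div_two : ∫ t, exp (-t ^ 2 / 2) = √(2 * π) := by
  simp only [exp_neg_sq_div_two, integral_gaussian]
  norm_num [div_div_eq_mul_div, mul_comm]

lemma integral_Iic_mul_exp_neg_sq_div_two (x : ℝ) :
    ∫ t in Iic x, t * exp (-t ^ 2 / 2) = -exp (-x ^ 2 / 2) := by
  have hderiv (t : ℝ) : HasDerivAt (fun s => -exp (-s ^ 2 / 2)) (t * exp (-t ^ 2 / 2)) t := by
    have hq : HasDerivAt (fun s : ℝ => -s ^ 2 / 2) (-t) t := by
      simpa using ((hasDerivAt_pow 2 t).neg.div_const 2).congr_deriv (by ring)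
    exact hq.exp.neg.congr_deriv (by ring)
  have hlim : Tendsto (fun t : ℝ => -exp (-t ^ 2 / 2)) atBot (nhds 0) := by
    have hsq : Tendsto (fun t : ℝ => t ^ 2 / 2) atBot atTop := by
      simpa [Function.comp_def] using ((tendsto_pow_atTop two_ne_zero).comp
        tendsto_neg_atBot_atTop).atTop_div_const (two_pos (α := ℝ))
    simpa [neg_div] using (tendsto_exp_atBot.comp (tendsto_neg_atTop_atBot.comp hsq)).neg
  simpa using integral_Iic_of_hasDerivAt_of_tendsto' (fun t _ => hderiv t)
    integrable_mul_exp_neg_sq_div_two.integrableOn hlim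

lemma Phi_nonneg (x : ℝ) : 0 ≤ Phi x :=
  mul_nonneg (inv_nonneg.2 (sqrt_nonneg _))
    (setIntegral_nonneg measurableSet_Iic fun _ _ => (exp_pos _).le)

lemma Phi_le_one (x : ℝ) : Phi x ≤ 1 := by
  have hpos : 0 < √(2 * π) := sqrt_pos.2 (by positivity)
  have hle : ∫ t in Iic x, exp (-t ^ 2 / 2) ≤ √(2 * π) :=
    integral_exp_neg_sq_div_two ▸ setIntegral_le_integral integrable_exp_neg_sq_div_two
      (.of_forall fun t => (exp_pos _).le)
  rw [Phi, inv_mul_le_iff₀ hpos, mul_one]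
  exact hle

/-- On `t ≤ x ≤ -m` the density is dominated by `(-t / m) exp(-t²/2)`, which has an explicit
primitive. -/
lemma Phi_le_of_le_neg {x m : ℝ} (hm : 0 < m) (hx : x ≤ -m) :
    Phi x ≤ exp (-x ^ 2 / 2) / (√(2 * π) * m) := by
  have hdom : ∫ t in Iic x, exp (-t ^ 2 / 2) ≤ ∫ t in Iic x, -m⁻¹ * (t * exp (-t ^ 2 / 2)) := by
    refine setIntegral_mono_on integrable_exp_neg_sq_div_two.integrableOn
      (integrable_mul_exp_neg_sq_div_two.const_mul _).integrableOn measurableSet_Iic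
      fun t ht => ?_
    have h1 : 1 ≤ -m⁻¹ * t := by
      rw [neg_mul, le_neg, ← div_eq_inv_mul, div_le_iff₀ hm]
      linarith [mem_Iic.1 ht]
    nlinarith [exp_pos (-t ^ 2 / 2)]
  rw [integral_const_mul, integral_Iic_mul_exp_neg_sq_div_two, neg_mul_neg] at hdom
  calc Phi x ≤ (√(2 * π))⁻¹ * (m⁻¹ * exp (-x ^ 2 / 2)) := by
        rw [Phi]; gcongr
    _ = exp (-x ^ 2 / 2) / (√(2 * π) * m) := by field_simp

lemma Phi_div_le {u β L : ℝ} (hβ : 0 < β) (hL : 0 < L) (hu : u ≤ -(L / 2)) :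
    Phi (u / β) ≤ 2 * β / √(2 * π) * L⁻¹ * exp (-u ^ 2 / (2 * β ^ 2)) := by
  have hx : u / β ≤ -(L / (2 * β)) := by
    rw [show -(L / (2 * β)) = -(L / 2) / β by ring]
    exact div_le_div_of_nonneg_right hu hβ.le
  calc Phi (u / β) ≤ exp (-(u / β) ^ 2 / 2) / (√(2 * π) * (L / (2 * β))) :=
        Phi_le_of_le_neg (by positivity) hx
    _ = 2 * β / √(2 * π) * L⁻¹ * exp (-u ^ 2 / (2 * β ^ 2)) := by
        field_simp

lemma pow_mul_one_sub_pow_le {p b : ℝ} (z : ℕ) (hp₀ : 0 ≤ p) (hp₁ : p ≤ 1) (hpb : p ≤ b) :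
    p ^ z * (1 - p) ^ (1 - z) ≤ b ^ z :=
  calc p ^ z * (1 - p) ^ (1 - z) ≤ p ^ z :=
        mul_le_of_le_one_right (by positivity) (pow_le_one₀ (by linarith) (by linarith))
    _ ≤ b ^ z := pow_le_pow_left₀ hp₀ hpb z

lemma Finset.prod_pow_mul_exp {ι : Type*} (s : Finset ι) (d : ℝ) (x : ι → ℝ) (z : ι → ℕ) :
    ∏ i ∈ s, (d * exp (x i)) ^ z i = d ^ (∑ i ∈ s, z i) * exp (∑ i ∈ s, z i * x i) := by
  simp_rw [mul_pow, Finset.prod_mul_distrib, Finset.prod_pow_eq_pow_sum, ← exp_nat_mul, exp_sum]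

lemma lik_le_prod {k : ℕ} {a : Fin k → ℝ} (ha : ∀ i, 0 < a i) (z : Fin k → ℕ) {α β : ℝ}
    (hβ : 0 < β) (hα : 0 < α) (hlog : 0 < log α) (hlarge : ∀ i, 2 * log (a i) ≤ log α) :
    lik k a z α β ≤ ∏ i, (2 * β / √(2 * π) * (log α)⁻¹ *
      exp (-(log (a i) - log α) ^ 2 / (2 * β ^ 2))) ^ z i := by
  refine Finset.prod_le_prod (fun i _ => ?_) (fun i _ => ?_)
  · have := Phi_le_one (log (a i / α) / β)
    exact mul_nonneg (pow_nonneg (Phi_nonneg _) _) (pow_nonneg (by linarith) _)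
  · refine pow_mul_one_sub_pow_le _ (Phi_nonneg _) (Phi_le_one _) ?_
    rw [log_div (ha i).ne' hα.ne']
    exact Phi_div_le hβ hlog (by linarith [hlarge i])

theorem stmt5_general (k : ℕ) (a : Fin k → ℝ) (ha : ∀ i, 0 < a i)
    (z : Fin k → ℕ) (β : ℝ) (hβ : 0 < β) :
    ∃ C > (0 : ℝ), ∃ α₀ : ℝ, ∀ α : ℝ, α₀ < α →
      lik k a z α β ≤ C * Real.log α ^ (-(∑ i, (z i : ℤ))) *
        Real.exp (-(∑ i, (z i : ℝ) * (Real.log (a i) - Real.log α) ^ 2) /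
          (2 * β ^ 2)) := by
  have h_eventually : ∀ᶠ α in atTop, 0 < α ∧ 0 < log α ∧ ∀ i, 2 * log (a i) ≤ log α :=
    (eventually_gt_atTop 0).and <| (tendsto_log_atTop.eventually_gt_atTop 0).and <|
      eventually_all.2 fun i => tendsto_log_atTop.eventually_ge_atTop _
  obtain ⟨α₀, hα₀⟩ := eventually_atTop.1 h_eventually
  refine ⟨(2 * β / √(2 * π)) ^ ∑ i, z i, by positivity, α₀, fun α hα => ?_⟩
  obtain ⟨hα, hlog, hlarge⟩ := hα₀ α hα.le
  have hexp : ∑ i, (z i : ℝ) * (-(log (a i) - log α) ^ 2 / (2 * β ^ 2)) =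
      -(∑ i, (z i : ℝ) * (log (a i) - log α) ^ 2) / (2 * β ^ 2) := by
    rw [neg_div, Finset.sum_div, ← Finset.sum_neg_distrib]
    exact Finset.sum_congr rfl fun i _ => by ring
  calc lik k a z α β ≤ _ := lik_le_prod ha z hβ hα hlog hlarge
    _ = _ := by
      rw [Finset.prod_pow_mul_exp, hexp, mul_pow, inv_pow, ← Nat.cast_sum, zpow_neg, zpow_natCast]

/-- Fix `k ≥ 1`, data `aᵢ ∈ (0,∞)`, `zᵢ ∈ {0,1}` and `β > 0`. With `|z| = Σ zᵢ`, as
`α → ∞` one has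
`ℓ_k(z|a,(α,β)) = O((log α)^{-|z|} exp(-(1/(2β²)) Σ zᵢ(log aᵢ - log α)²))`. -/
theorem stmt5 (k : ℕ) (hk : 1 ≤ k) (a : Fin k → ℝ) (ha : ∀ i, 0 < a i)
    (z : Fin k → ℕ) (hz : ∀ i, z i = 0 ∨ z i = 1) (β : ℝ) (hβ : 0 < β) :
    ∃ C > (0 : ℝ), ∃ α₀ : ℝ, ∀ α : ℝ, α₀ < α →
      lik k a z α β ≤ C * Real.log α ^ (-(∑ i, (z i : ℤ))) *
        Real.exp (-(∑ i, (z i : ℝ) * (Real.log (a i) - Real.log α) ^ 2) /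
          (2 * β ^ 2)) :=
  stmt5_general k a ha z β hβ
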